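/- Let c be a tetrahedron and n one of its vertices. For i ∈ {1,2,3}, let e_i be the three edges of c containing n with edge vectors 𝐞ᵢ, and let f_i be the unique face of c containing n that does not contain e_i, with face (area) vector 𝐟ᵢ; let rᵢ ∈ {−1,1} be the unique sign such that rᵢ·(𝐟ᵢ · 𝐞ᵢ) > 0. Then Σ_{i=1}^{3} rᵢ (𝐟ᵢ ⊗ 𝐞ᵢ) = 3|c|·I₃. -/

import Mathlib

open Matrix

noncomputable section

abbrev V3 : Type := Fin 3 → ℝ

/-- Area vector of the triangle `(a, b, c)`: half the cross product of two edge vectors. -/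
def triVec (a b c : V3) : V3 := (2:ℝ)⁻¹ • ((b - a) ⨯₃ (c - a))

/-- Barycenter of a triangle. -/
def bary3 (a b c : V3) : V3 := (3:ℝ)⁻¹ • (a + b + c)

/-- Midpoint (barycenter of an edge). -/
def mid (a b : V3) : V3 := (2:ℝ)⁻¹ • (a + b)

/-- Barycenter of a tetrahedron. -/
def ctr (a b c d : V3) : V3 := (4:ℝ)⁻¹ • (a + b + c + d)

/-- Volume of the tetrahedron with vertices `a b c d`. -/
def tvol (a b c d : V3) : ℝ := |(Matrix.of ![b - a, c - a, d - a]).det| / 6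


private lemma sumSmul {M : Type*} [AddCommGroup M] [Module ℝ M] (s : ℝ) (A B C : M) :
    s • A + (-s) • B + s • C = s • (A - B + C) := by
  rw [smul_add, smul_sub, neg_smul]; abel

private lemma signKey (a b f e : V3) (r s : ℝ) (hf : f = a ∨ f = -a) (he : e = b ∨ e = -b)
    (hr : r = 1 ∨ r = -1) (hs : s = 1 ∨ s = -1)
    (hp : 0 < r * (f ⬝ᵥ e)) (hps : 0 < s * (a ⬝ᵥ b)) :
    r • vecMulVec f e = s • vecMulVec a b := by
  rcases hf with rfl|rfl <;> rcases he with rfl|rfl <;> rcases hr with rfl|rfl <;>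
    rcases hs with rfl|rfl <;>
    first
      | (exfalso;
         simp only [dotProduct_neg, neg_dotProduct, neg_neg, one_mul, neg_mul, mul_neg]
           at hp hps;
         linarith)
      | (ext i j; simp [vecMulVec]; try ring)

private lemma dot1 (n p1 p2 p3 : V3) :
    triVec n p2 p3 ⬝ᵥ (p1 - n) = (Matrix.of ![p1 - n, p2 - n, p3 - n]).det / 2 := by
  simp [triVec, crossProduct, dotProduct, Fin.sum_univ_three, Matrix.det_fin_three]; ring

private lemma dot2 (n p1 p2 p3 : V3) :
    triVec n p1 p3 ⬝ᵥ (p2 - n) = -((Matrix.of ![p1 - n, p2 - n, p3 - n]).det / 2) := by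
  simp [triVec, crossProduct, dotProduct, Fin.sum_univ_three, Matrix.det_fin_three]; ring

private lemma dot3 (n p1 p2 p3 : V3) :
    triVec n p1 p2 ⬝ᵥ (p3 - n) = (Matrix.of ![p1 - n, p2 - n, p3 - n]).det / 2 := by
  simp [triVec, crossProduct, dotProduct, Fin.sum_univ_three, Matrix.det_fin_three]; ring

private lemma mainId (n p1 p2 p3 : V3) :
    vecMulVec (triVec n p2 p3) (p1 - n) - vecMulVec (triVec n p1 p3) (p2 - n)
      + vecMulVec (triVec n p1 p2) (p3 - n)
      = ((Matrix.of ![p1 - n, p2 - n, p3 - n]).det / 2) • (1 : Matrix (Fin 3) (Fin 3) ℝ) := by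
  ext i j
  fin_cases i <;> fin_cases j <;>
    simp [vecMulVec, triVec, crossProduct, Matrix.det_fin_three, Matrix.one_apply] <;> ring

set_option maxHeartbeats 2000000 in
/-- for a non-degenerate tetrahedron with vertex `n` and opposite
vertices `p1 p2 p3`: with `eᵢ` the edge vector of the edge through `n` towards `pᵢ`
(either orientation), `fᵢ` a face vector of the face of `c` through `n` not
containing `eᵢ` (either orientation), and `rᵢ ∈ {±1}` the unique sign with
`rᵢ (fᵢ ⋅ eᵢ) > 0`, one has `Σᵢ rᵢ (fᵢ ⊗ eᵢ) = 3|c|·I₃`. -/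
theorem stmt_3 (n p1 p2 p3 : V3)
    (hnd : (Matrix.of ![p1 - n, p2 - n, p3 - n]).det ≠ 0)
    (e1 e2 e3 f1 f2 f3 : V3) (r1 r2 r3 : ℝ)
    (he1 : e1 = p1 - n ∨ e1 = n - p1)
    (he2 : e2 = p2 - n ∨ e2 = n - p2)
    (he3 : e3 = p3 - n ∨ e3 = n - p3)
    (hf1 : f1 = triVec n p2 p3 ∨ f1 = -triVec n p2 p3)
    (hf2 : f2 = triVec n p1 p3 ∨ f2 = -triVec n p1 p3)
    (hf3 : f3 = triVec n p1 p2 ∨ f3 = -triVec n p1 p2)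
    (hr1 : r1 = 1 ∨ r1 = -1) (hr2 : r2 = 1 ∨ r2 = -1) (hr3 : r3 = 1 ∨ r3 = -1)
    (hp1 : 0 < r1 * (f1 ⬝ᵥ e1)) (hp2 : 0 < r2 * (f2 ⬝ᵥ e2)) (hp3 : 0 < r3 * (f3 ⬝ᵥ e3)) :
    r1 • vecMulVec f1 e1 + r2 • vecMulVec f2 e2 + r3 • vecMulVec f3 e3 =
      (3 * tvol n p1 p2 p3) • (1 : Matrix (Fin 3) (Fin 3) ℝ) := by
  set D := (Matrix.of ![p1 - n, p2 - n, p3 - n]).det with hDdef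
  set s : ℝ := if 0 < D then 1 else -1 with hs_def
  have hs : s = 1 ∨ s = -1 := by unfold s; split <;> simp
  have hsD : 0 < s * D := by
    rcases lt_trichotomy D 0 with h|h|h
    · simp only [hs_def, if_neg (not_lt.mpr h.le)]; linarith
    · exact absurd h hnd
    · simp only [hs_def, if_pos h]; linarith
  have hsD' : s * D = |D| := by
    rcases hs with h|h <;> rw [h] at hsD ⊢ <;>
      first
        | (rw [abs_of_pos (by linarith)]; ring)
        | (rw [abs_of_neg (by linarith)]; ring)
  have d1 := dot1 n p1 p2 p3
  have d2 := dot2 n p1 p2 p3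
  have d3 := dot3 n p1 p2 p3
  rw [← hDdef] at d1 d2 d3
  have he1' : e1 = p1 - n ∨ e1 = -(p1 - n) := by
    rcases he1 with h|h; · exact Or.inl h
    · right; rw [h, neg_sub]
  have he2' : e2 = p2 - n ∨ e2 = -(p2 - n) := by
    rcases he2 with h|h; · exact Or.inl h
    · right; rw [h, neg_sub]
  have he3' : e3 = p3 - n ∨ e3 = -(p3 - n) := by
    rcases he3 with h|h; · exact Or.inl h
    · right; rw [h, neg_sub]
  have k1 := signKey (triVec n p2 p3) (p1 - n) f1 e1 r1 s hf1 he1' hr1 hs hp1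
    (by rw [d1]; linarith)
  have k2 := signKey (triVec n p1 p3) (p2 - n) f2 e2 r2 (-s) hf2 he2' hr2
    (by rcases hs with h|h <;> rw [h] <;> simp) hp2
    (by rw [d2]; nlinarith)
  have k3 := signKey (triVec n p1 p2) (p3 - n) f3 e3 r3 s hf3 he3' hr3 hs hp3
    (by rw [d3]; linarith)
  have main := mainId n p1 p2 p3
  rw [← hDdef] at main
  rw [k1, k2, k3]
  have hsum := sumSmul s (vecMulVec (triVec n p2 p3) (p1 - n))
    (vecMulVec (triVec n p1 p3) (p2 - n)) (vecMulVec (triVec n p1 p2) (p3 - n))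
  rw [hsum, main, smul_smul]
  have hvol : 3 * tvol n p1 p2 p3 = s * (D / 2) := by
    unfold tvol
    rw [← hDdef, show s * (D / 2) = (s * D) / 2 by ring, hsD']
    ring
  rw [hvol]
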